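/- For positive reals $a, b$ with $a \ne b$, one has $\tfrac{1}{4}(a^{1/8}b^{7/8}+a^{7/8}b^{1/8}+a^{3/8}b^{5/8}+a^{5/8}b^{3/8}) \le \dfrac{a-b}{\ln a-\ln b} \le \tfrac{1}{4}(a^{1/4}b^{3/4}+a^{3/4}b^{1/4}) + \tfrac{1}{4}\sqrt{ab}+\tfrac{1}{4}\cdot\tfrac{a+b}{2}$. -/

import Mathlib

open Real

lemma sinh_le_mul_cosh {t : ℝ} (ht : 0 ≤ t) : Real.sinh t ≤ t * Real.cosh t := by
  have hmono : MonotoneOn (fun x : ℝ => x * Real.cosh x - Real.sinh x) (Set.Ici 0) := by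
    have hder : ∀ x : ℝ, HasDerivAt (fun x : ℝ => x * Real.cosh x - Real.sinh x)
        (x * Real.sinh x) x := by
      intro x
      have h := ((hasDerivAt_id x).mul (Real.hasDerivAt_cosh x)).sub (Real.hasDerivAt_sinh x)
      refine h.congr_deriv ?_
      simp only [id_eq]
      ring
    apply monotoneOn_of_deriv_nonneg (convex_Ici 0)
    · exact (Continuous.continuousOn (by fun_prop))
    · intro x _
      exact (hder x).differentiableAt.differentiableWithinAt
    · intro x hx
      rw [interior_Ici] at hx
      rw [(hder x).deriv]
      exact mul_nonneg hx.le (Real.sinh_nonneg_iff.mpr hx.le)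
  have h0 : (0:ℝ) ∈ Set.Ici (0:ℝ) := Set.mem_Ici.mpr le_rfl
  have ht' : t ∈ Set.Ici (0:ℝ) := ht
  have := hmono h0 ht' ht
  simpa using this

lemma key_left {t : ℝ} (ht : 0 < t) :
    (4*t) * (Real.cosh (3*t) + Real.cosh t) ≤ 2 * Real.sinh (4*t) := by
  have pyth := Real.cosh_sq_sub_sinh_sq t
  have h2s := Real.sinh_two_mul t
  have h2c := Real.cosh_two_mul t
  have h4s : Real.sinh (4*t) = 2 * Real.sinh (2*t) * Real.cosh (2*t) := by
    rw [show (4:ℝ)*t = 2*(2*t) by ring, Real.sinh_two_mul]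
  have h3c : Real.cosh (3*t) = Real.cosh (2*t) * Real.cosh t + Real.sinh (2*t) * Real.sinh t := by
    rw [show (3:ℝ)*t = 2*t + t by ring, Real.cosh_add]
  have ident : 2 * Real.sinh (4*t) = 4 * Real.sinh t * (Real.cosh (3*t) + Real.cosh t) := by
    rw [h4s, h3c, h2s, h2c]
    linear_combination (4 * Real.sinh t * Real.cosh t) * pyth
  have hst : t < Real.sinh t := Real.self_lt_sinh_iff.mpr ht
  have hcpos : 0 < Real.cosh (3*t) + Real.cosh t := by positivity
  nlinarith [hst, hcpos]

lemma key_right {t : ℝ} (ht : 0 < t) :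
    2 * Real.sinh (4*t) ≤ (4*t) * (Real.cosh (2*t) + 1/2 + Real.cosh (4*t) / 2) := by
  have pyth := Real.cosh_sq_sub_sinh_sq t
  have pyth2 := Real.cosh_sq_sub_sinh_sq (2*t)
  have h2s := Real.sinh_two_mul t
  have h2c := Real.cosh_two_mul t
  have h4s : Real.sinh (4*t) = 2 * Real.sinh (2*t) * Real.cosh (2*t) := by
    rw [show (4:ℝ)*t = 2*(2*t) by ring, Real.sinh_two_mul]
  have h4c : Real.cosh (4*t) = Real.cosh (2*t) ^ 2 + Real.sinh (2*t) ^ 2 := by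
    rw [show (4:ℝ)*t = 2*(2*t) by ring, Real.cosh_two_mul]
  have hbound : Real.sinh t ≤ t * Real.cosh t := sinh_le_mul_cosh ht.le
  have hc : 0 < Real.cosh t := Real.cosh_pos t
  have hc2 : 0 < Real.cosh (2*t) := Real.cosh_pos (2*t)
  -- step2 : 2 sinh 2t ≤ 2t (1 + cosh 2t)
  have step2 : 2 * Real.sinh (2*t) ≤ 2*t * (1 + Real.cosh (2*t)) := by
    rw [h2s, h2c]
    nlinarith [hbound, hc, pyth]
  -- step3 : 2 sinh 4t ≤ 4t cosh 2t (1 + cosh 2t)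
  have step3 : 2 * Real.sinh (4*t) ≤ 4*t * Real.cosh (2*t) * (1 + Real.cosh (2*t)) := by
    rw [h4s]
    nlinarith [step2, hc2]
  -- RHS equality
  have heq : (4*t) * (Real.cosh (2*t) + 1/2 + Real.cosh (4*t) / 2)
      = 4*t * Real.cosh (2*t) * (1 + Real.cosh (2*t)) := by
    rw [h4c]
    linear_combination (-2*t)*pyth2
  linarith [step3, heq.ge, heq.le]

theorem stmt_17 (a b : ℝ) (ha : 0 < a) (hb : 0 < b) (hab : a ≠ b) :
    (a ^ (1/8 : ℝ) * b ^ (7/8 : ℝ) + a ^ (7/8 : ℝ) * b ^ (1/8 : ℝ) +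
      a ^ (3/8 : ℝ) * b ^ (5/8 : ℝ) + a ^ (5/8 : ℝ) * b ^ (3/8 : ℝ)) / 4 ≤
        (a - b) / (Real.log a - Real.log b) ∧
    (a - b) / (Real.log a - Real.log b) ≤
      (a ^ (1/4 : ℝ) * b ^ (3/4 : ℝ) + a ^ (3/4 : ℝ) * b ^ (1/4 : ℝ)) / 4 +
        (1/4) * Real.sqrt (a * b) + (1/4) * ((a + b) / 2) := by
  -- reduce to exp form
  set u := Real.log a with hu
  set v := Real.log b with hv
  have hau : a = Real.exp u := (Real.exp_log ha).symm
  have hbv : b = Real.exp v := (Real.exp_log hb).symm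
  set s := (u + v) / 2 with hs
  set t := (u - v) / 8 with htdef
  have hune : u ≠ v := fun h => hab (by rw [hau, hbv, h])
  have hpair : ∀ c : ℝ, Real.exp (s - c) + Real.exp (s + c)
      = Real.exp s * (2 * Real.cosh c) := by
    intro c
    rw [show s - c = s + (-c) by ring, Real.exp_add, Real.exp_add, Real.cosh_eq]
    ring
  have hterm : ∀ p q : ℝ, a ^ (p : ℝ) * b ^ (q : ℝ) = Real.exp (p * u + q * v) := by
    intro p q
    rw [Real.rpow_def_of_pos ha, Real.rpow_def_of_pos hb, ← Real.exp_add, ← hu, ← hv]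
    ring_nf
  have hsub : a - b = Real.exp s * (2 * Real.sinh (4*t)) := by
    rw [hau, hbv, Real.sinh_eq,
      show u = s + 4*t by rw [hs, htdef]; ring,
      show v = s - 4*t by rw [hs, htdef]; ring,
      show s - 4*t = s + -(4*t) by ring, Real.exp_add, Real.exp_add]
    ring
  have hlog : u - v = 8 * t := by rw [htdef]; ring
  have hsqrt : Real.sqrt (a * b) = Real.exp s := by
    rw [hau, hbv, ← Real.exp_add, show u + v = 2 * s by rw [hs]; ring]
    rw [show (2:ℝ) * s = s + s by ring, Real.exp_add]
    exact Real.sqrt_mul_self (Real.exp_pos s).le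
  have hsum : a + b = Real.exp s * (2 * Real.cosh (4*t)) := by
    rw [hau, hbv, show u = s + 4*t by rw [hs, htdef]; ring,
      show v = s - 4*t by rw [hs, htdef]; ring, add_comm]
    exact hpair (4*t)
  have h18 : a ^ (1/8 : ℝ) * b ^ (7/8 : ℝ) + a ^ (7/8 : ℝ) * b ^ (1/8 : ℝ)
      = Real.exp s * (2 * Real.cosh (3*t)) := by
    rw [hterm, hterm, show (1/8 : ℝ) * u + (7/8 : ℝ) * v = s - 3*t by rw [hs, htdef]; ring,
      show (7/8 : ℝ) * u + (1/8 : ℝ) * v = s + 3*t by rw [hs, htdef]; ring]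
    exact hpair (3*t)
  have h38 : a ^ (3/8 : ℝ) * b ^ (5/8 : ℝ) + a ^ (5/8 : ℝ) * b ^ (3/8 : ℝ)
      = Real.exp s * (2 * Real.cosh t) := by
    rw [hterm, hterm, show (3/8 : ℝ) * u + (5/8 : ℝ) * v = s - t by rw [hs, htdef]; ring,
      show (5/8 : ℝ) * u + (3/8 : ℝ) * v = s + t by rw [hs, htdef]; ring]
    exact hpair t
  have h14 : a ^ (1/4 : ℝ) * b ^ (3/4 : ℝ) + a ^ (3/4 : ℝ) * b ^ (1/4 : ℝ)
      = Real.exp s * (2 * Real.cosh (2*t)) := by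
    rw [hterm, hterm, show (1/4 : ℝ) * u + (3/4 : ℝ) * v = s - 2*t by rw [hs, htdef]; ring,
      show (3/4 : ℝ) * u + (1/4 : ℝ) * v = s + 2*t by rw [hs, htdef]; ring]
    exact hpair (2*t)
  have hexp : 0 < Real.exp s := Real.exp_pos s
  -- main inequalities, by cases on sign of t
  have hmain : ∀ t : ℝ, t ≠ 0 →
      Real.exp s * (2 * Real.cosh (3*t)) + Real.exp s * (2 * Real.cosh t) ≤
        4 * (Real.exp s * (2 * Real.sinh (4*t)) / (8*t)) ∧
      Real.exp s * (2 * Real.sinh (4*t)) / (8*t) ≤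
        Real.exp s * (2 * Real.cosh (2*t)) / 4 + (1/4) * Real.exp s +
          (1/4) * (Real.exp s * (2 * Real.cosh (4*t)) / 2) := by
    intro t ht0
    have main_pos : ∀ t : ℝ, 0 < t →
        Real.exp s * (2 * Real.cosh (3*t)) + Real.exp s * (2 * Real.cosh t) ≤
          4 * (Real.exp s * (2 * Real.sinh (4*t)) / (8*t)) ∧
        Real.exp s * (2 * Real.sinh (4*t)) / (8*t) ≤
          Real.exp s * (2 * Real.cosh (2*t)) / 4 + (1/4) * Real.exp s +
            (1/4) * (Real.exp s * (2 * Real.cosh (4*t)) / 2) := by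
      intro t ht
      have kl := key_left ht
      have kr := key_right ht
      have h8t : (0:ℝ) < 8 * t := by linarith
      constructor
      · rw [show (4:ℝ) * (Real.exp s * (2 * Real.sinh (4*t)) / (8*t))
            = Real.exp s * Real.sinh (4*t) / t by ring, le_div_iff₀ ht]
        nlinarith [mul_le_mul_of_nonneg_left kl hexp.le]
      · rw [div_le_iff₀ h8t]
        nlinarith [mul_le_mul_of_nonneg_left kr hexp.le]
    rcases lt_or_gt_of_ne ht0 with h | h
    · have := main_pos (-t) (by linarith)
      simpa [mul_neg, Real.sinh_neg, Real.cosh_neg, div_neg, neg_div, neg_neg] using this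
    · exact main_pos t h
  have ht0 : t ≠ 0 := by
    rw [htdef]
    intro h
    apply hune
    have : u - v = 0 := by linarith [(div_eq_zero_iff.mp h).resolve_right (by norm_num)]
    linarith
  obtain ⟨hL, hR⟩ := hmain t ht0
  have hq : (a - b) / (u - v) = Real.exp s * (2 * Real.sinh (4*t)) / (8*t) := by
    rw [hsub, hlog]
  constructor
  · linarith [h18, h38, hq, hL]
  · rw [hq, hsqrt, h14, hsum]
    exact hR
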